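/- arXiv:2308.01481 — 3 statements merged into one kernel-verified Lean document; each statement's English description precedes it below -/
import Mathlib

section
/- Let Q be a symmetric positive definite d×d real matrix, η > 0 with η‖Q‖₂ ≤ 1, a ∈ (1/2, 1), η_k = η k^{−a}, and γ = min(λ_min(Q), 1/(2η)). Then for all integers j > i ≥ 0, ‖W_i^j‖₂ ≤ exp(−η γ ∑_{k=i+1}^j k^{−a}) ≤ exp(−(γη/(1−a)) (j^{1−a} − (i+1)^{1−a})). -/
/-!
For self-adjoint `Q` the isometric functional calculus bounds `‖I - sQ‖` by the largest
`|1 - sλ|` over the spectrum, which is at most `1 - sγ ≤ exp(-sγ)` when `γ ≤ λ ≤ ‖Q‖ ≤ 1/s`;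
submultiplicativity then turns `‖W_i^j‖` into the exponential of a sum. That sum dominates the
integral of `x^(-a)` because the Bernoulli bound `(x + 1)^(1-a) - x^(1-a) ≤ (1 - a) x^(-a)`
telescopes.
-/

open MeasureTheory ProbabilityTheory Filter
open scoped Matrix.Norms.L2Operator ENNReal NNReal Topology RealInnerProductSpace

noncomputable section

/-- `ℝ^d` with the Euclidean norm. -/
abbrev Vec (d : ℕ) := EuclideanSpace ℝ (Fin d)

/-- `d × d` real matrices; via `Matrix.L2OpNorm` the norm `‖·‖` on them is the
`ℓ²`-operator (spectral) norm `‖·‖₂`. -/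
abbrev Mat (d : ℕ) := Matrix (Fin d) (Fin d) ℝ

/-- Matrix-vector multiplication on Euclidean space. -/
def mulVecE {d : ℕ} (A : Mat d) (v : Vec d) : Vec d :=
  (EuclideanSpace.equiv (Fin d) ℝ).symm (A.mulVec (EuclideanSpace.equiv (Fin d) ℝ v))

/-- Outer product `v wᵀ` of Euclidean vectors, as a matrix. -/
def outerE {d : ℕ} (v w : Vec d) : Mat d :=
  Matrix.vecMulVec (EuclideanSpace.equiv (Fin d) ℝ v) (EuclideanSpace.equiv (Fin d) ℝ w)

/-- `W_i^j = ∏_{k=i+1}^{j} (I - η_k Q)`, with `W_i^i = I` (the factors commute, so the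
order of multiplication is immaterial). -/
def Wprod {d : ℕ} (Q : Mat d) (ηk : ℕ → ℝ) (i j : ℕ) : Mat d :=
  ((List.range (j - i)).map fun m => (1 : Mat d) - ηk (i + 1 + m) • Q).prod

section CStar

variable {A : Type*} [NormedRing A] [StarRing A] [NormedAlgebra ℝ A]
  [IsometricContinuousFunctionalCalculus ℝ A IsSelfAdjoint]

theorem IsSelfAdjoint.norm_one_sub_smul_le {a : A} (ha : IsSelfAdjoint a) {s γ : ℝ}
    (hs : 0 ≤ s) (hγ : ∀ x ∈ spectrum ℝ a, γ ≤ x) (hsa : s * ‖a‖ ≤ 1) (hsγ : s * γ ≤ 1) :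
    ‖1 - s • a‖ ≤ 1 - s * γ := by
  have hcfc : cfc (fun x : ℝ => 1 - s * x) a = 1 - s • a := by
    rw [cfc_sub _ _ a, cfc_const_one ℝ a, cfc_const_mul_id s a]
  rw [← hcfc]
  refine norm_cfc_le (sub_nonneg.2 hsγ) fun x hx => ?_
  have hxa : |x| ≤ ‖a‖ := IsometricContinuousFunctionalCalculus.norm_spectrum_le a hx
  have hsx : s * x ≤ 1 := (mul_le_mul_of_nonneg_left ((le_abs_self x).trans hxa) hs).trans hsa
  rw [Real.norm_eq_abs, abs_le]
  constructor <;> nlinarith [hγ x hx]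

end CStar

theorem Matrix.IsHermitian.iInf_eigenvalues_le {n 𝕜 : Type*} [Fintype n] [DecidableEq n]
    [RCLike 𝕜] {A : Matrix n n 𝕜} (hA : A.IsHermitian) {x : ℝ} (hx : x ∈ spectrum ℝ A) :
    ⨅ i, hA.eigenvalues i ≤ x := by
  obtain ⟨i, rfl⟩ := hA.spectrum_real_eq_range_eigenvalues ▸ hx
  exact ciInf_le (Set.finite_range _).bddBelow i

theorem Real.add_one_rpow_sub_rpow_le {x p : ℝ} (hx : 0 < x) (hp0 : 0 ≤ p) (hp1 : p ≤ 1) :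
    (x + 1) ^ p - x ^ p ≤ p * x ^ (p - 1) := by
  have hbern : (1 + x⁻¹) ^ p ≤ 1 + p * x⁻¹ :=
    rpow_one_add_le_one_add_mul_self (by linarith [inv_pos.2 hx]) hp0 hp1
  calc (x + 1) ^ p - x ^ p = x ^ p * (1 + x⁻¹) ^ p - x ^ p := by
        rw [← Real.mul_rpow hx.le (by positivity), mul_add, mul_inv_cancel₀ hx.ne', mul_one]
    _ ≤ x ^ p * (1 + p * x⁻¹) - x ^ p := by gcongr
    _ = p * x ^ (p - 1) := by rw [Real.rpow_sub_one hx.ne']; ring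

theorem sub_rpow_le_mul_sum_Icc_rpow_neg {a : ℝ} (ha0 : 0 ≤ a) (ha1 : a ≤ 1) {i j : ℕ}
    (hij : i ≤ j) :
    ((j : ℝ) + 1) ^ (1 - a) - ((i : ℝ) + 1) ^ (1 - a) ≤
      (1 - a) * ∑ k ∈ Finset.Icc (i + 1) j, (k : ℝ) ^ (-a) := by
  induction j, hij using Nat.le_induction with
  | base => simp
  | succ j hij ih =>
    have hstep := Real.add_one_rpow_sub_rpow_le (x := (j : ℝ) + 1) (by positivity)
      (sub_nonneg.2 ha1) (by linarith)
    rw [Finset.sum_Icc_succ_top (by omega), mul_add]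
    push_cast
    rw [show 1 - a - 1 = -a by ring] at hstep
    linarith

theorem sub_rpow_div_le_sum_Icc_rpow_neg {a : ℝ} (ha0 : 0 ≤ a) (ha1 : a < 1) {i j : ℕ}
    (hij : i ≤ j) :
    ((j : ℝ) ^ (1 - a) - ((i : ℝ) + 1) ^ (1 - a)) / (1 - a) ≤
      ∑ k ∈ Finset.Icc (i + 1) j, (k : ℝ) ^ (-a) := by
  have hsum := sub_rpow_le_mul_sum_Icc_rpow_neg ha0 ha1.le hij
  have hj : (j : ℝ) ^ (1 - a) ≤ ((j : ℝ) + 1) ^ (1 - a) :=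
    Real.rpow_le_rpow (by positivity) (by linarith) (by linarith)
  rw [div_le_iff₀ (by linarith)]
  linarith

theorem norm_list_prod_map_range_le_exp_sum {A : Type*} [SeminormedRing A] {f : ℕ → A}
    {c : ℕ → ℝ} (h : ∀ m, ‖f m‖ ≤ Real.exp (c m)) {n : ℕ} (hn : 0 < n) :
    ‖((List.range n).map f).prod‖ ≤ Real.exp (∑ m ∈ Finset.range n, c m) := by
  induction n, hn using Nat.le_induction with
  | base => simpa using h 0
  | succ n hn ih =>
    rw [List.range_succ, List.map_append, List.prod_append, Finset.sum_range_succ, Real.exp_add]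
    simp only [List.map_cons, List.map_nil, List.prod_cons, List.prod_nil, mul_one]
    exact (norm_mul_le _ _).trans (mul_le_mul ih (h n) (norm_nonneg _) (Real.exp_nonneg _))

theorem norm_Wprod_le_exp_sum {d : ℕ} (Q : Mat d) (ηk c : ℕ → ℝ) {i j : ℕ} (hij : i < j)
    (h : ∀ k, i < k → ‖1 - ηk k • Q‖ ≤ Real.exp (c k)) :
    ‖Wprod Q ηk i j‖ ≤ Real.exp (∑ k ∈ Finset.Icc (i + 1) j, c k) := by
  rw [← Finset.Ico_add_one_right_eq_Icc, Finset.sum_Ico_eq_sum_range,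
    show j + 1 - (i + 1) = j - i by omega]
  exact norm_list_prod_map_range_le_exp_sum (fun m => h _ (by omega)) (by omega)

theorem matrix_product_decay_general {d : ℕ} (Q : Mat d) (hQ : Q.PosDef)
    (η a : ℝ) (hη : 0 < η) (hηQ : η * ‖Q‖ ≤ 1) (ha : a ∈ Set.Ioo (1 / 2 : ℝ) 1)
    (ηk : ℕ → ℝ) (hηk : ∀ k : ℕ, ηk k = η * (k : ℝ) ^ (-a))
    (γ : ℝ) (hγ : γ = min (⨅ i, hQ.isHermitian.eigenvalues i) (1 / (2 * η))) :
    ∀ i j : ℕ, i < j →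
      ‖Wprod Q ηk i j‖ ≤
        Real.exp (-(η * γ) * ∑ k ∈ Finset.Icc (i + 1) j, (k : ℝ) ^ (-a)) ∧
      Real.exp (-(η * γ) * ∑ k ∈ Finset.Icc (i + 1) j, (k : ℝ) ^ (-a)) ≤
        Real.exp (-(γ * η / (1 - a)) * ((j : ℝ) ^ (1 - a) - ((i : ℝ) + 1) ^ (1 - a))) := by
  intro i j hij
  obtain ⟨ha0, ha1⟩ := ha
  have hγ0 : 0 ≤ γ :=
    hγ ▸ le_min (Real.iInf_nonneg fun i => (hQ.eigenvalues_pos i).le) (by positivity)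
  have hγη : η * γ ≤ 1 / 2 := by
    have := hγ ▸ min_le_right _ _
    rw [le_div_iff₀ (by positivity)] at this
    linarith
  have hfactor (k : ℕ) (hk : i < k) :
      ‖1 - ηk k • Q‖ ≤ Real.exp (-(η * γ) * (k : ℝ) ^ (-a)) := by
    have hk1 : (1 : ℝ) ≤ k := by exact_mod_cast Nat.one_le_of_lt hk
    have hpow0 : 0 ≤ (k : ℝ) ^ (-a) := by positivity
    have hpow1 : (k : ℝ) ^ (-a) ≤ 1 := Real.rpow_le_one_of_one_le_of_nonpos hk1 (by linarith)
    have hspec (x : ℝ) (hx : x ∈ spectrum ℝ Q) : γ ≤ x :=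
      hγ ▸ (min_le_left _ _).trans (hQ.isHermitian.iInf_eigenvalues_le hx)
    calc ‖1 - ηk k • Q‖ ≤ 1 - ηk k * γ := by
          refine hQ.isHermitian.isSelfAdjoint.norm_one_sub_smul_le (by rw [hηk]; positivity)
            hspec ?_ ?_ <;> rw [hηk] <;> nlinarith [norm_nonneg Q]
      _ ≤ Real.exp (-(ηk k * γ)) := Real.one_sub_le_exp_neg _
      _ = Real.exp (-(η * γ) * (k : ℝ) ^ (-a)) := by rw [hηk]; ring_nf
  refine ⟨(norm_Wprod_le_exp_sum Q ηk _ hij hfactor).trans_eq (by rw [Finset.mul_sum]),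
    Real.exp_le_exp.2 ?_⟩
  calc -(η * γ) * ∑ k ∈ Finset.Icc (i + 1) j, (k : ℝ) ^ (-a)
      ≤ -(η * γ) * (((j : ℝ) ^ (1 - a) - ((i : ℝ) + 1) ^ (1 - a)) / (1 - a)) :=
        mul_le_mul_of_nonpos_left (sub_rpow_div_le_sum_Icc_rpow_neg (by linarith) ha1 hij.le)
          (by nlinarith)
    _ = -(γ * η / (1 - a)) * ((j : ℝ) ^ (1 - a) - ((i : ℝ) + 1) ^ (1 - a)) := by ring

/-- **Lemma A.3**: for a symmetric positive definite `Q` with `η‖Q‖₂ ≤ 1` and step sizes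
`η_k = η k^(-a)`, `a ∈ (1/2, 1)`, the matrix products `W_i^j` decay like
`exp(-ηγ ∑_{k=i+1}^j k^(-a)) ≤ exp(-(γη/(1-a)) (j^(1-a) - (i+1)^(1-a)))`, where
`γ = min(λ_min(Q), 1/(2η))`. -/
theorem matrix_product_decay {d : ℕ} (Q : Mat d) (hQ : Q.PosDef) (hQsymm : Q.IsSymm)
    (η a : ℝ) (hη : 0 < η) (hηQ : η * ‖Q‖ ≤ 1) (ha : a ∈ Set.Ioo (1 / 2 : ℝ) 1)
    (ηk : ℕ → ℝ) (hηk : ∀ k : ℕ, ηk k = η * (k : ℝ) ^ (-a))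
    (γ : ℝ) (hγ : γ = min (⨅ i, hQ.isHermitian.eigenvalues i) (1 / (2 * η))) :
    ∀ i j : ℕ, i < j →
      ‖Wprod Q ηk i j‖ ≤
        Real.exp (-(η * γ) * ∑ k ∈ Finset.Icc (i + 1) j, (k : ℝ) ^ (-a)) ∧
      Real.exp (-(η * γ) * ∑ k ∈ Finset.Icc (i + 1) j, (k : ℝ) ^ (-a)) ≤
        Real.exp (-(γ * η / (1 - a)) * ((j : ℝ) ^ (1 - a) - ((i : ℝ) + 1) ^ (1 - a))) :=
  matrix_product_decay_general Q hQ η a hη hηQ ha ηk hηk γ hγ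

end
end

section
/- Let Q be a symmetric positive definite d×d real matrix, η > 0 with η‖Q‖₂ ≤ 1, a ∈ (1/2, 1), and η_k = η k^{−a}. Then there exists a constant C > 0, depending only on η, a and λ_min(Q), such that ‖S_i^j‖₂ ≤ C (i+1)^a for all integers j > i ≥ 0. -/
open MeasureTheory ProbabilityTheory Filter
open scoped Matrix.Norms.L2Operator ENNReal NNReal Topology RealInnerProductSpace

noncomputable section

/-- `S_i^j = ∑_{k=i+1}^j W_i^k`, with `S_i^i = 0`. -/
def Ssum {d : ℕ} (Q : Mat d) (ηk : ℕ → ℝ) (i j : ℕ) : Mat d :=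
  ∑ k ∈ Finset.Icc (i + 1) j, Wprod Q ηk i k

/-!
Diagonalising `Q`, `‖I - η_k Q‖₂ = max_i |1 - η_k λ_i| ≤ 1 - μ k^(-a)` with
`μ = min (η λ_min) 1`, so `‖S_i^j‖₂` is dominated by the scalar sum
`s_i^j = ∑_{k=i+1}^{j} ∏_{m=i+1}^{k} (1 - μ m^(-a))`. This obeys
`s_i = (1 - μ (i+1)^(-a)) (1 + s_{i+1})`. Because `(x+1)^a - x^a ≤ a x^(a-1) → 0`, the sequence
`(2/μ) (i+1)^a` is a supersolution of that recursion beyond some `i₀`, hence bounds `s_i` there;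
for `i < i₀` each step of the recursion adds at most `1`.
-/

open Finset

namespace Matrix.IsHermitian

variable {n 𝕜 : Type*} [RCLike 𝕜] [Fintype n] [DecidableEq n] {A : Matrix n n 𝕜}

theorem l2_opNorm_cfc (hA : A.IsHermitian) (f : ℝ → ℝ) : ‖cfc f A‖ = ‖f ∘ hA.eigenvalues‖ := by
  rw [hA.cfc_eq, IsHermitian.cfc, Unitary.conjStarAlgAut_apply, mul_assoc,
    CStarRing.norm_coe_unitary_mul, ← Unitary.coe_star, CStarRing.norm_mul_coe_unitary,
    l2_opNorm_diagonal]
  simp [Pi.norm_def, Function.comp_def]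

theorem abs_eigenvalues_le_l2_opNorm (hA : A.IsHermitian) (i : n) :
    |hA.eigenvalues i| ≤ ‖A‖ :=
  calc |hA.eigenvalues i| ≤ ‖id ∘ hA.eigenvalues‖ := norm_le_pi_norm (id ∘ hA.eigenvalues) i
    _ = ‖A‖ := by rw [← hA.l2_opNorm_cfc, cfc_id ℝ A]

theorem l2_opNorm_one_sub_smul_le (hA : A.IsHermitian) {t s lam : ℝ} (ht : 0 ≤ t) (hs : s ≤ 1)
    (hlam : ∀ i, lam ≤ hA.eigenvalues i) (hslam : s ≤ t * lam) (htA : t * ‖A‖ ≤ 1) :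
    ‖1 - t • A‖ ≤ 1 - s := by
  have hcfc : cfc (fun x => 1 - t * x) A = 1 - t • A := by
    rw [cfc_sub _ _ A, cfc_const_one ℝ A, cfc_const_mul_id t A]
  rw [← hcfc, hA.l2_opNorm_cfc]
  refine (pi_norm_le_iff_of_nonneg (by linarith)).mpr fun i => ?_
  have hlow : t * lam ≤ t * hA.eigenvalues i := mul_le_mul_of_nonneg_left (hlam i) ht
  have hup : t * hA.eigenvalues i ≤ t * ‖A‖ :=
    mul_le_mul_of_nonneg_left ((le_abs_self _).trans (hA.abs_eigenvalues_le_l2_opNorm i)) ht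
  rw [Function.comp_apply, Real.norm_eq_abs, abs_le]
  constructor <;> linarith

end Matrix.IsHermitian

theorem exists_pos_forall_le {ι : Type*} [Finite ι] {f : ι → ℝ} (hf : ∀ i, 0 < f i) :
    ∃ c > 0, ∀ i, c ≤ f i := by
  cases isEmpty_or_nonempty ι
  · exact ⟨1, one_pos, isEmptyElim⟩
  · obtain ⟨i₀, hi₀⟩ := Finite.exists_min f
    exact ⟨f i₀, hf i₀, hi₀⟩

def scalarW (b : ℕ → ℝ) (i k : ℕ) : ℝ :=
  ∏ m ∈ Icc (i + 1) k, (1 - b m)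

def scalarS (b : ℕ → ℝ) (i j : ℕ) : ℝ :=
  ∑ k ∈ Icc (i + 1) j, scalarW b i k

section scalar

variable {b : ℕ → ℝ}

theorem scalarW_succ {i k : ℕ} (h : i ≤ k) :
    scalarW b i (k + 1) = scalarW b i k * (1 - b (k + 1)) :=
  prod_Icc_succ_top (by omega) _

theorem scalarW_nonneg (hb : ∀ m, b m ≤ 1) (i k : ℕ) : 0 ≤ scalarW b i k :=
  prod_nonneg fun m _ => sub_nonneg.mpr (hb m)

theorem scalarS_nonneg (hb : ∀ m, b m ≤ 1) (i j : ℕ) : 0 ≤ scalarS b i j :=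
  sum_nonneg fun k _ => scalarW_nonneg hb i k

theorem scalarS_of_le {i j : ℕ} (h : j ≤ i) : scalarS b i j = 0 := by
  rw [scalarS, Icc_eq_empty (by omega), sum_empty]

theorem scalarS_eq_mul {i j : ℕ} (h : i < j) :
    scalarS b i j = (1 - b (i + 1)) * (1 + scalarS b (i + 1) j) := by
  have hW : ∀ k ∈ Icc (i + 1) j, scalarW b i k = (1 - b (i + 1)) * scalarW b (i + 1) k := by
    intro k hk
    rw [scalarW, ← insert_Icc_add_one_left_eq_Icc (mem_Icc.mp hk).1, prod_insert (by simp)]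
    rfl
  have hWself : scalarW b (i + 1) (i + 1) = 1 := by
    rw [scalarW, Icc_eq_empty (by omega), prod_empty]
  rw [scalarS, sum_congr rfl hW, ← mul_sum, ← insert_Icc_add_one_left_eq_Icc h,
    sum_insert (by simp), hWself]
  rfl

theorem scalarS_le_one_add (hb0 : ∀ m, 0 ≤ b m) (hb1 : ∀ m, b m ≤ 1) (i j : ℕ) :
    scalarS b i j ≤ 1 + scalarS b (i + 1) j := by
  rcases lt_or_ge i j with h | h
  · rw [scalarS_eq_mul h]
    have := scalarS_nonneg hb1 (i + 1) j
    nlinarith [hb0 (i + 1)]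
  · rw [scalarS_of_le h]
    linarith [scalarS_nonneg hb1 (i + 1) j]

theorem scalarS_le_add (hb0 : ∀ m, 0 ≤ b m) (hb1 : ∀ m, b m ≤ 1) (i j n : ℕ) :
    scalarS b i j ≤ n + scalarS b (i + n) j := by
  induction n with
  | zero => simp
  | succ n ih =>
    have := scalarS_le_one_add hb0 hb1 (i + n) j
    push_cast
    rw [← add_assoc i n 1]
    linarith

theorem scalarS_le_of_supersolution (hb1 : ∀ m, b m ≤ 1) {g : ℕ → ℝ} (hg0 : ∀ i, 0 ≤ g i)
    {i₀ : ℕ} (hg : ∀ i, i₀ ≤ i → (1 - b (i + 1)) * (1 + g (i + 1)) ≤ g i) (j : ℕ) :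
    ∀ i, i₀ ≤ i → scalarS b i j ≤ g i := by
  suffices ∀ n i, j ≤ i + n → i₀ ≤ i → scalarS b i j ≤ g i from
    fun i hi => this j i (by omega) hi
  intro n
  induction n with
  | zero => intro i h _; rw [scalarS_of_le (by omega)]; exact hg0 i
  | succ n ih =>
    intro i h hi
    rcases lt_or_ge i j with hij | hij
    · rw [scalarS_eq_mul hij]
      calc (1 - b (i + 1)) * (1 + scalarS b (i + 1) j)
          ≤ (1 - b (i + 1)) * (1 + g (i + 1)) := by
            gcongr
            · linarith [hb1 (i + 1)]
            · exact ih (i + 1) (by omega) (by omega)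
        _ ≤ g i := hg i hi
    · rw [scalarS_of_le hij]; exact hg0 i

end scalar

theorem Real.rpow_add_one_le {x a : ℝ} (hx : 0 < x) (ha0 : 0 ≤ a) (ha1 : a ≤ 1) :
    (x + 1) ^ a ≤ x ^ a + a * x ^ (a - 1) := by
  have hBernoulli : (1 + x⁻¹) ^ a ≤ 1 + a * x⁻¹ :=
    rpow_one_add_le_one_add_mul_self (by linarith [inv_pos.mpr hx]) ha0 ha1
  calc (x + 1) ^ a = x ^ a * (1 + x⁻¹) ^ a := by
        rw [← Real.mul_rpow hx.le (by positivity), mul_add, mul_inv_cancel₀ hx.ne', mul_one]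
    _ ≤ x ^ a * (1 + a * x⁻¹) := by gcongr
    _ = x ^ a + a * x ^ (a - 1) := by rw [Real.rpow_sub_one hx.ne']; ring

theorem Real.natCast_rpow_neg_le_one (m : ℕ) {a : ℝ} (ha : 0 < a) : (m : ℝ) ^ (-a) ≤ 1 := by
  rcases Nat.eq_zero_or_pos m with rfl | hm
  · simp [Real.zero_rpow (neg_ne_zero.mpr ha.ne')]
  · exact Real.rpow_le_one_of_one_le_of_nonpos (by exact_mod_cast hm) (by linarith)

/-- `x ↦ (2/μ) x^a` is a supersolution of the recursion `scalarS_eq_mul` with steps `μ x^(-a)`. -/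
theorem one_sub_mul_one_add_rpow_le {μ a x : ℝ} (hμ : 0 < μ) (ha0 : 0 ≤ a) (ha1 : a ≤ 1)
    (hx : 0 < x) (hμx : μ * x ^ (-a) ≤ 1) (hsmall : a * x ^ (a - 1) ≤ μ / 2) :
    (1 - μ * x ^ (-a)) * (1 + 2 / μ * (x + 1) ^ a) ≤ 2 / μ * x ^ a := by
  have hinc : 2 / μ * (x + 1) ^ a ≤ 2 / μ * x ^ a + 1 :=
    calc 2 / μ * (x + 1) ^ a ≤ 2 / μ * (x ^ a + a * x ^ (a - 1)) := by
          gcongr; exact Real.rpow_add_one_le hx ha0 ha1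
      _ ≤ 2 / μ * (x ^ a + μ / 2) := by gcongr
      _ = 2 / μ * x ^ a + 1 := by field_simp
  calc (1 - μ * x ^ (-a)) * (1 + 2 / μ * (x + 1) ^ a)
      ≤ (1 - μ * x ^ (-a)) * (2 + 2 / μ * x ^ a) :=
        mul_le_mul_of_nonneg_left (by linarith) (by linarith)
    _ = 2 / μ * x ^ a - 2 * μ * x ^ (-a) := by
        rw [Real.rpow_neg hx.le]; field_simp; ring
    _ ≤ 2 / μ * x ^ a := by nlinarith [Real.rpow_nonneg hx.le (-a)]

theorem eventually_mul_rpow_sub_one_le {a ε : ℝ} (ha : a < 1) (hε : 0 < ε) :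
    ∀ᶠ i : ℕ in atTop, a * ((i : ℝ) + 1) ^ (a - 1) ≤ ε := by
  have hlim : Tendsto (fun x : ℝ => a * x ^ (a - 1)) atTop (𝓝 0) := by
    simpa [neg_sub] using (tendsto_rpow_neg_atTop (sub_pos.mpr ha)).const_mul a
  have hshift : Tendsto (fun i : ℕ => (i : ℝ) + 1) atTop atTop :=
    tendsto_atTop_add_const_right _ 1 tendsto_natCast_atTop_atTop
  exact hshift.eventually (hlim.eventually (eventually_le_nhds hε))

theorem exists_scalarS_rpow_le {μ a : ℝ} (hμ0 : 0 < μ) (hμ1 : μ ≤ 1) (ha0 : 0 < a) (ha1 : a < 1) :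
    ∃ C : ℝ, 0 < C ∧ ∀ i j : ℕ,
      scalarS (fun m => μ * (m : ℝ) ^ (-a)) i j ≤ C * ((i : ℝ) + 1) ^ a := by
  set b : ℕ → ℝ := fun m => μ * (m : ℝ) ^ (-a)
  have hb0 : ∀ m, 0 ≤ b m := fun m => by positivity
  have hb1 : ∀ m, b m ≤ 1 := fun m =>
    mul_le_one₀ hμ1 (by positivity) (Real.natCast_rpow_neg_le_one m ha0)
  obtain ⟨i₀, hi₀⟩ := eventually_atTop.mp (eventually_mul_rpow_sub_one_le ha1 (half_pos hμ0))
  set g : ℕ → ℝ := fun i => 2 / μ * ((i : ℝ) + 1) ^ a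
  have htail : ∀ j i, i₀ ≤ i → scalarS b i j ≤ g i := by
    refine fun j => scalarS_le_of_supersolution hb1 (fun i => by positivity) (fun i hi => ?_) j
    have := one_sub_mul_one_add_rpow_le hμ0 ha0.le ha1.le (x := (i : ℝ) + 1) (by positivity)
      (by simpa [b] using hb1 (i + 1)) (hi₀ i hi)
    simpa [b, g] using this
  have hone : ∀ i : ℕ, 1 ≤ ((i : ℝ) + 1) ^ a := fun i => Real.one_le_rpow (by linarith) ha0.le
  refine ⟨i₀ + g i₀, by positivity, fun i j => ?_⟩
  rcases le_or_gt i₀ i with hi | hi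
  · calc scalarS b i j ≤ g i := htail j i hi
      _ ≤ (i₀ + g i₀) * ((i : ℝ) + 1) ^ a := by
        have : 2 / μ ≤ i₀ + g i₀ := by nlinarith [hone i₀, (by positivity : (0 : ℝ) ≤ 2 / μ)]
        exact mul_le_mul_of_nonneg_right this (by positivity)
  · calc scalarS b i j ≤ (i₀ - i : ℕ) + scalarS b (i + (i₀ - i)) j :=
          scalarS_le_add hb0 hb1 i j _
      _ ≤ i₀ + g i₀ := by
        rw [Nat.add_sub_cancel' hi.le]
        gcongr
        · exact_mod_cast Nat.sub_le i₀ i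
        · exact htail j i₀ le_rfl
      _ ≤ (i₀ + g i₀) * ((i : ℝ) + 1) ^ a := le_mul_of_one_le_right (by positivity) (hone i)

section matrix

variable {d : ℕ} (Q : Mat d) (ηk : ℕ → ℝ)

theorem Wprod_self (i : ℕ) : Wprod Q ηk i i = 1 := by
  simp [Wprod]

theorem Wprod_succ {i k : ℕ} (h : i ≤ k) :
    Wprod Q ηk i (k + 1) = Wprod Q ηk i k * (1 - ηk (k + 1) • Q) := by
  rw [Wprod, Wprod, Nat.sub_add_comm h, List.range_succ, List.map_append, List.prod_append]
  simp [show i + 1 + (k - i) = k + 1 by omega]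

variable {Q ηk} {b : ℕ → ℝ} (hfac : ∀ m, ‖1 - ηk m • Q‖ ≤ 1 - b m)
include hfac

theorem norm_Wprod_le {i k : ℕ} (h : i ≤ k) : ‖Wprod Q ηk i k‖ ≤ scalarW b i k := by
  have hb1 : ∀ m, b m ≤ 1 := fun m => by linarith [hfac m, norm_nonneg (1 - ηk m • Q)]
  induction k, h using Nat.le_induction with
  | base =>
    rw [Wprod_self, scalarW, Icc_eq_empty (by omega), prod_empty, Matrix.cstar_norm_def, map_one]
    exact ContinuousLinearMap.norm_id_le
  | succ k hik ih =>
    rw [Wprod_succ Q ηk hik, scalarW_succ hik]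
    exact (norm_mul_le _ _).trans
      (mul_le_mul ih (hfac (k + 1)) (norm_nonneg _) (scalarW_nonneg hb1 i k))

theorem norm_Ssum_le (i j : ℕ) : ‖Ssum Q ηk i j‖ ≤ scalarS b i j :=
  (norm_sum_le _ _).trans <| sum_le_sum fun k hk =>
    norm_Wprod_le hfac (by linarith [(mem_Icc.mp hk).1])

end matrix

theorem matrix_partial_sum_bound_general {d : ℕ} (Q : Mat d) (hQ : Q.PosDef)
    (η a : ℝ) (hη : 0 < η) (hηQ : η * ‖Q‖ ≤ 1) (ha : a ∈ Set.Ioo (1 / 2 : ℝ) 1)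
    (ηk : ℕ → ℝ) (hηk : ∀ k : ℕ, ηk k = η * (k : ℝ) ^ (-a)) :
    ∃ C : ℝ, 0 < C ∧ ∀ i j : ℕ, i < j →
      ‖Ssum Q ηk i j‖ ≤ C * ((i : ℝ) + 1) ^ a := by
  obtain ⟨ha0, ha1⟩ : 0 < a ∧ a < 1 := ⟨by linarith [ha.1], ha.2⟩
  obtain ⟨lam, hlam, hlam_le⟩ := exists_pos_forall_le hQ.eigenvalues_pos
  set μ := min (η * lam) 1
  have hfac : ∀ m : ℕ, ‖1 - ηk m • Q‖ ≤ 1 - μ * (m : ℝ) ^ (-a) := fun m => by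
    have hm1 := Real.natCast_rpow_neg_le_one m ha0
    rw [hηk]
    refine hQ.isHermitian.l2_opNorm_one_sub_smul_le (by positivity)
      (mul_le_one₀ (min_le_right _ _) (by positivity) hm1) hlam_le ?_ ?_
    · calc μ * (m : ℝ) ^ (-a) ≤ η * lam * (m : ℝ) ^ (-a) := by gcongr; exact min_le_left _ _
        _ = η * (m : ℝ) ^ (-a) * lam := by ring
    · calc η * (m : ℝ) ^ (-a) * ‖Q‖ = (m : ℝ) ^ (-a) * (η * ‖Q‖) := by ring
        _ ≤ 1 := mul_le_one₀ hm1 (by positivity) hηQ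
  obtain ⟨C, hC, hbound⟩ :=
    exists_scalarS_rpow_le (μ := μ) (lt_min (by positivity) one_pos) (min_le_right _ _) ha0 ha1
  exact ⟨C, hC, fun i j _ => (norm_Ssum_le hfac i j).trans (hbound i j)⟩

/-- **Lemma A.4**: for a symmetric positive definite `Q` with `η‖Q‖₂ ≤ 1` and step sizes
`η_k = η k^(-a)`, `a ∈ (1/2, 1)`, the partial sums `S_i^j` satisfy
`‖S_i^j‖₂ ≤ C (i+1)^a` for a constant `C` depending only on `η`, `a` and `λ_min(Q)`. -/
theorem matrix_partial_sum_bound {d : ℕ} (Q : Mat d) (hQ : Q.PosDef) (hQsymm : Q.IsSymm)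
    (η a : ℝ) (hη : 0 < η) (hηQ : η * ‖Q‖ ≤ 1) (ha : a ∈ Set.Ioo (1 / 2 : ℝ) 1)
    (ηk : ℕ → ℝ) (hηk : ∀ k : ℕ, ηk k = η * (k : ℝ) ^ (-a)) :
    ∃ C : ℝ, 0 < C ∧ ∀ i j : ℕ, i < j →
      ‖Ssum Q ηk i j‖ ≤ C * ((i : ℝ) + 1) ^ a :=
  matrix_partial_sum_bound_general Q hQ η a hη hηQ ha ηk hηk
end
end

section
/- Let η > 0, α ∈ (1/2, 1), η_k = η k^{−α}, c > 0 with cη_1 ≤ 1, C ≥ 0, and s > 1. If (b_k)_{k≥0} is a sequence of nonnegative reals satisfying b_{k+1} ≤ (1 − c η_{k+1}) b_k + C η_{k+1}^s for all k ≥ 0, then there exists a constant C' > 0 (depending only on η, α, c, C, s and b_0) such that b_k ≤ C' η_k^{s−1} for all k ≥ 1. -/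
/-!
Write `r_k = η_k ^ (s - 1)`. The ratio `r_k / r_(k+1) = (1 + 1/k) ^ (α (s - 1))` is `1 + O(1/k)`,
while `η_(k+1) ≍ k ^ (-α)` with `α < 1`, so eventually `r_k ≤ (1 + c η_(k+1) / 2) r_(k+1)`.
From then on the bound `b_k ≤ D r_k` propagates: `(1 - c η)(1 + c η / 2) ≤ 1 - c η / 2`, and the
gain `c η_(k+1) D r_(k+1) / 2` absorbs the forcing term `C η_(k+1) r_(k+1)` once `D ≥ 2 C / c`.
The finitely many earlier indices are covered by enlarging `D`.
-/

open MeasureTheory ProbabilityTheory Filter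
open scoped Matrix.Norms.L2Operator ENNReal NNReal Topology RealInnerProductSpace

noncomputable section

open Real

lemma le_mul_of_recursion_step {b b' r r' e c C D : ℝ} (he : 0 ≤ e) (hce : c * e ≤ 1)
    (hr' : 0 ≤ r') (hD : 0 ≤ D) (hCD : 2 * C ≤ c * D) (hb : b ≤ D * r)
    (hr : r ≤ (1 + c * e / 2) * r') (hrec : b' ≤ (1 - c * e) * b + C * e * r') :
    b' ≤ D * r' := by
  have hb' : (1 - c * e) * b ≤ (1 - c * e) * (D * ((1 + c * e / 2) * r')) :=
    mul_le_mul_of_nonneg_left (hb.trans (mul_le_mul_of_nonneg_left hr hD)) (by linarith)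
  nlinarith [mul_nonneg (mul_nonneg he hr') (sub_nonneg.2 hCD),
    mul_nonneg (sq_nonneg (c * e)) (mul_nonneg hD hr')]

theorem le_mul_of_recursion {b r e : ℕ → ℝ} {c C D : ℝ} {K : ℕ} (he : ∀ k, 0 ≤ e (k + 1))
    (hce : ∀ k, c * e (k + 1) ≤ 1) (hr : ∀ k, 0 ≤ r (k + 1)) (hD : 0 ≤ D)
    (hCD : 2 * C ≤ c * D) (hratio : ∀ k ≥ K, r k ≤ (1 + c * e (k + 1) / 2) * r (k + 1))
    (hrec : ∀ k, b (k + 1) ≤ (1 - c * e (k + 1)) * b k + C * e (k + 1) * r (k + 1))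
    (hK : b K ≤ D * r K) : ∀ k ≥ K, b k ≤ D * r k := by
  intro k hk
  induction k, hk using Nat.le_induction with
  | base => exact hK
  | succ k hk ih =>
    exact le_mul_of_recursion_step (he k) (hce k) (hr k) hD hCD ih (hratio k hk) (hrec k)

lemma exists_le_mul_of_pos {ι : Type*} {b r : ι → ℝ} (s : Finset ι) (hr : ∀ i ∈ s, 0 < r i) :
    ∃ D, ∀ i ∈ s, b i ≤ D * r i := by
  obtain ⟨D, hD⟩ := (s.image fun i => b i / r i).exists_le
  exact ⟨D, fun i hi => (div_le_iff₀ (hr i hi)).1 (hD _ (Finset.mem_image_of_mem _ hi))⟩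

theorem exists_le_mul_of_recursion {b r e : ℕ → ℝ} {c C : ℝ} (hc : 0 < c)
    (he : ∀ k, 0 ≤ e (k + 1)) (hce : ∀ k, c * e (k + 1) ≤ 1) (hr : ∀ k, 0 < r (k + 1))
    (hratio : ∀ᶠ k in atTop, r k ≤ (1 + c * e (k + 1) / 2) * r (k + 1))
    (hrec : ∀ k, b (k + 1) ≤ (1 - c * e (k + 1)) * b k + C * e (k + 1) * r (k + 1)) :
    ∃ D, 0 < D ∧ ∀ k, 1 ≤ k → b k ≤ D * r k := by
  obtain ⟨K, hK⟩ := eventually_atTop.1 hratio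
  obtain ⟨D₀, hD₀⟩ := exists_le_mul_of_pos (b := b) (Finset.Icc 1 (K + 1)) fun k hk => by
    obtain ⟨j, rfl⟩ := Nat.exists_eq_add_of_le' (Finset.mem_Icc.1 hk).1
    exact hr j
  obtain ⟨D, hD_one, hD_C, hD_D₀⟩ : ∃ D, 1 ≤ D ∧ 2 * C / c ≤ D ∧ D₀ ≤ D :=
    ⟨max 1 (max (2 * C / c) D₀), le_max_left _ _, le_max_of_le_right (le_max_left _ _),
      le_max_of_le_right (le_max_right _ _)⟩
  have hinit : ∀ k ∈ Finset.Icc 1 (K + 1), b k ≤ D * r k := fun k hk => by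
    obtain ⟨j, rfl⟩ := Nat.exists_eq_add_of_le' (Finset.mem_Icc.1 hk).1
    exact (hD₀ _ hk).trans (by gcongr; exact (hr j).le)
  refine ⟨D, by linarith, fun k hk => ?_⟩
  rcases le_total k (K + 1) with hkK | hKk
  · exact hinit k (Finset.mem_Icc.2 ⟨hk, hkK⟩)
  · exact le_mul_of_recursion he hce (fun k => (hr k).le) (by linarith)
      ((div_le_iff₀' hc).1 hD_C) (fun k hk => hK k (by omega)) hrec
      (hinit _ (Finset.mem_Icc.2 ⟨by omega, le_rfl⟩)) k hKk

lemma one_add_rpow_le_exp {x β : ℝ} (hx : -1 ≤ x) (hβ : 0 ≤ β) : (1 + x) ^ β ≤ exp (β * x) := by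
  rw [mul_comm, exp_mul]
  exact rpow_le_rpow (by linarith) (by linarith [add_one_le_exp x]) hβ

lemma one_add_rpow_le_one_add_two_mul {x β : ℝ} (hx : 0 ≤ x) (hβ : 0 ≤ β) (hβx : β * x ≤ 1) :
    (1 + x) ^ β ≤ 1 + 2 * (β * x) := by
  have hβx₀ : 0 ≤ β * x := mul_nonneg hβ hx
  have := abs_exp_sub_one_le (x := β * x) (by rwa [abs_of_nonneg hβx₀])
  rw [abs_of_nonneg hβx₀, abs_le] at this
  linarith [one_add_rpow_le_exp (by linarith : -1 ≤ x) hβ]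

lemma eventually_one_add_inv_rpow_le {α β a : ℝ} (hα : α < 1) (hβ : 0 ≤ β) (ha : 0 < a) :
    ∀ᶠ x : ℝ in atTop, (1 + x⁻¹) ^ β ≤ 1 + a * (x + 1) ^ (-α) := by
  have hgrowth : Tendsto (fun x : ℝ => (x + 1) ^ (1 - α)) atTop atTop :=
    (tendsto_rpow_atTop (by linarith)).comp (tendsto_atTop_add_const_right _ 1 tendsto_id)
  filter_upwards [eventually_ge_atTop 1, eventually_ge_atTop β,
    hgrowth.eventually_ge_atTop (4 * β / a)] with x hx1 hxβ hgrow
  have hx : 0 < x := by linarith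
  have hx1' : 0 < x + 1 := by linarith
  have hsplit : (x + 1) ^ (-α) = (x + 1) ^ (1 - α) * (x + 1)⁻¹ := by
    rw [← rpow_neg_one, ← rpow_add hx1']; ring_nf
  calc (1 + x⁻¹) ^ β ≤ 1 + 2 * (β * x⁻¹) :=
        one_add_rpow_le_one_add_two_mul (by positivity) hβ
          (by rw [← div_eq_mul_inv]; exact (div_le_one hx).2 hxβ)
    _ ≤ 1 + 4 * β * (x + 1)⁻¹ := by
        have : x⁻¹ ≤ 2 * (x + 1)⁻¹ := by
          rw [inv_le_iff_one_le_mul₀ hx]; field_simp; linarith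
        nlinarith
    _ ≤ 1 + a * (x + 1) ^ (-α) := by
        rw [hsplit, ← mul_assoc]
        gcongr 1 + ?_ * _
        rwa [← div_le_iff₀' ha]

lemma rpow_neg_eq_one_add_inv_rpow_mul {x : ℝ} (hx : 0 < x) (β : ℝ) :
    x ^ (-β) = (1 + x⁻¹) ^ β * (x + 1) ^ (-β) := by
  have hx1 : 0 < x + 1 := by linarith
  rw [show 1 + x⁻¹ = (x + 1) / x by field_simp, div_rpow hx1.le hx.le, rpow_neg hx.le,
    rpow_neg hx1.le]
  field_simp

lemma mul_rpow_neg_rpow {η x : ℝ} (hη : 0 ≤ η) (hx : 0 ≤ x) (α γ : ℝ) :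
    (η * x ^ (-α)) ^ γ = η ^ γ * x ^ (-(α * γ)) := by
  rw [mul_rpow hη (rpow_nonneg hx _), ← rpow_mul hx, neg_mul]

lemma eventually_mul_rpow_neg_rpow_le {η α c γ : ℝ} (hη : 0 < η) (hα₀ : 0 ≤ α) (hα₁ : α < 1)
    (hc : 0 < c) (hγ : 0 ≤ γ) :
    ∀ᶠ x : ℝ in atTop, (η * x ^ (-α)) ^ γ ≤
      (1 + c * (η * (x + 1) ^ (-α)) / 2) * (η * (x + 1) ^ (-α)) ^ γ := by
  have ha : 0 < c * η / 2 := by positivity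
  filter_upwards [eventually_one_add_inv_rpow_le hα₁ (mul_nonneg hα₀ hγ) ha,
    eventually_gt_atTop 0] with x hratio hx
  rw [mul_rpow_neg_rpow hη.le hx.le, mul_rpow_neg_rpow hη.le (by linarith),
    rpow_neg_eq_one_add_inv_rpow_mul hx]
  calc η ^ γ * ((1 + x⁻¹) ^ (α * γ) * (x + 1) ^ (-(α * γ)))
      ≤ η ^ γ * ((1 + c * η / 2 * (x + 1) ^ (-α)) * (x + 1) ^ (-(α * γ))) := by gcongr
    _ = _ := by ring

theorem recursion_rate_lemma_general (η α c C s : ℝ) (hη : 0 < η)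
    (hα : α ∈ Set.Ioo (1 / 2 : ℝ) 1) (hc : 0 < c) (hs : 1 < s)
    (ηk : ℕ → ℝ) (hηk : ∀ k : ℕ, ηk k = η * (k : ℝ) ^ (-α))
    (hcη : c * ηk 1 ≤ 1)
    (b : ℕ → ℝ)
    (hrec : ∀ k : ℕ, b (k + 1) ≤ (1 - c * ηk (k + 1)) * b k + C * ηk (k + 1) ^ s) :
    ∃ C' : ℝ, 0 < C' ∧ ∀ k : ℕ, 1 ≤ k → b k ≤ C' * ηk k ^ (s - 1) := by
  obtain ⟨hα₀, hα₁⟩ := hα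
  have hηk_pos (k : ℕ) : 0 < ηk (k + 1) := by rw [hηk]; positivity
  have hcηk (k : ℕ) : c * ηk (k + 1) ≤ 1 := by
    refine le_trans ?_ hcη
    rw [hηk, hηk, Nat.cast_one, one_rpow]
    gcongr
    exact rpow_le_one_of_one_le_of_nonpos (by simp) (by linarith)
  have hratio : ∀ᶠ k in atTop,
      ηk k ^ (s - 1) ≤ (1 + c * ηk (k + 1) / 2) * ηk (k + 1) ^ (s - 1) := by
    filter_upwards [tendsto_natCast_atTop_atTop.eventually <|
      eventually_mul_rpow_neg_rpow_le hη (by linarith) hα₁ hc (by linarith : 0 ≤ s - 1)] with k hk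
    rw [hηk, hηk]; push_cast; exact hk
  have hrec' (k : ℕ) : b (k + 1) ≤
      (1 - c * ηk (k + 1)) * b k + C * ηk (k + 1) * ηk (k + 1) ^ (s - 1) := by
    rw [mul_assoc, ← rpow_one_add' (hηk_pos k).le (by linarith), add_sub_cancel]
    exact hrec k
  exact exists_le_mul_of_recursion hc (fun k => (hηk_pos k).le) hcηk
    (fun k => rpow_pos_of_pos (hηk_pos k) _) hratio hrec'

/-- The deterministic recursion lemma behind Lemma B.4: if a nonnegative sequence `b_k`
satisfies `b_(k+1) ≤ (1 - c η_(k+1)) b_k + C η_(k+1)^s` with `η_k = η k^(-α)`,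
`α ∈ (1/2, 1)`, `c η₁ ≤ 1` and `s > 1`, then `b_k = O(η_k^(s-1))`. -/
theorem recursion_rate_lemma (η α c C s : ℝ) (hη : 0 < η)
    (hα : α ∈ Set.Ioo (1 / 2 : ℝ) 1) (hc : 0 < c) (hC : 0 ≤ C) (hs : 1 < s)
    (ηk : ℕ → ℝ) (hηk : ∀ k : ℕ, ηk k = η * (k : ℝ) ^ (-α))
    (hcη : c * ηk 1 ≤ 1)
    (b : ℕ → ℝ) (hb : ∀ k, 0 ≤ b k)
    (hrec : ∀ k : ℕ, b (k + 1) ≤ (1 - c * ηk (k + 1)) * b k + C * ηk (k + 1) ^ s) :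
    ∃ C' : ℝ, 0 < C' ∧ ∀ k : ℕ, 1 ≤ k → b k ≤ C' * ηk k ^ (s - 1) :=
  recursion_rate_lemma_general η α c C s hη hα hc hs ηk hηk hcη b hrec
end
end
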